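/- Entropy-Splitting for m variables (non-smooth case): Let X1, ..., Xm and Z be finite random variables such that H_min(Xi Xj | Z) >= α for all i ≠ j. Define V as the smallest index j such that P[Xj = xj | Z = z] >= 2^{-α/2} (for the realized values), and V = m if no such index exists. Let W be a random variable over {1,...,m} independent of (X1,...,Xm,Z,V) with H_min(W) >= 1. Then H_min(X_W | V, W, Z, V ≠ W) >= α/2 - log2(m) - 1. -/

import Mathlib

/-
For `v ≠ w`, the event `V = v` is determined by `(X, Z)`, so independence of `W` factors the
guessing probability of `X_w` given `(V = v, W = w, Z)` as `P[W = w]` times that of `X_w` given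
`(V = v, Z)`. If `w < v`, the value of `X_w` was rejected when `V` was chosen, so each of its
values has conditional probability below `c = 2^(-α/2)`. If `v < w`, the value of `X_v` was
accepted, hence is one of at most `1/c` heavy values, and guessing `X_w` costs at most that
factor over guessing the pair `(X_v, X_w)`, i.e. at most `c⁻¹ · c² = c`. Summing over `v, w`
gives `m · c`, while `P[V ≠ W] ≥ 1/2` since `W` is independent of `V` and has no atom above `1/2`.
-/

open Finset Real

section Prob

variable {Ω : Type*} [Fintype Ω]

-- reducible, so that the explicit sums of the statement are instances of it
abbrev prob (μ : Ω → ℝ) (E : Ω → Prop) [DecidablePred E] : ℝ :=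
  ∑ ω, if E ω then μ ω else 0

variable {μ : Ω → ℝ}

lemma prob_nonneg (hμ0 : ∀ ω, 0 ≤ μ ω) (E : Ω → Prop) [DecidablePred E] : 0 ≤ prob μ E :=
  sum_nonneg fun ω _ => ite_nonneg (hμ0 ω) le_rfl

lemma prob_mono (hμ0 : ∀ ω, 0 ≤ μ ω) {E F : Ω → Prop} [DecidablePred E] [DecidablePred F]
    (h : ∀ ω, E ω → F ω) : prob μ E ≤ prob μ F :=
  sum_le_sum fun ω _ => by
    by_cases hE : E ω
    · simp [hE, h ω hE]
    · simpa [hE] using ite_nonneg (hμ0 ω) le_rfl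

lemma prob_congr {E F : Ω → Prop} [DecidablePred E] [DecidablePred F]
    (h : ∀ ω, E ω ↔ F ω) : prob μ E = prob μ F :=
  sum_congr rfl fun ω _ => if_congr (h ω) rfl rfl

lemma prob_eq_zero_of_forall_not {E : Ω → Prop} [DecidablePred E] (h : ∀ ω, ¬ E ω) :
    prob μ E = 0 :=
  sum_eq_zero fun ω _ => if_neg (h ω)

lemma sum_prob_fiberwise {β : Type*} [Fintype β] [DecidableEq β] (Y : Ω → β)
    (E : Ω → Prop) [DecidablePred E] :
    ∑ b, prob μ (fun ω => Y ω = b ∧ E ω) = prob μ E := by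
  rw [sum_comm]
  simp [ite_and]

lemma sum_prob_eq_one (hμ1 : ∑ ω, μ ω = 1) {β : Type*} [Fintype β] [DecidableEq β] (Y : Ω → β) :
    ∑ b, prob μ (fun ω => Y ω = b) = 1 := by
  rw [← hμ1, sum_comm]
  simp

lemma prob_not (hμ1 : ∑ ω, μ ω = 1) (E : Ω → Prop) [DecidablePred E] :
    prob μ (fun ω => ¬ E ω) = 1 - prob μ E := by
  rw [← hμ1, eq_sub_iff_add_eq, ← sum_add_distrib]
  exact sum_congr rfl fun ω _ => by by_cases h : E ω <;> simp [h]

lemma prob_and_eq_mul_of_factorsThrough {β : Type*} [Fintype β] [DecidableEq β]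
    {E F : Ω → Prop} [DecidablePred E] [DecidablePred F] {Y : Ω → β}
    (hind : ∀ y, prob μ (fun ω => E ω ∧ Y ω = y) = prob μ E * prob μ (fun ω => Y ω = y))
    (hF : Function.FactorsThrough F Y) :
    prob μ (fun ω => E ω ∧ F ω) = prob μ E * prob μ F := by
  rw [← sum_prob_fiberwise Y (fun ω => E ω ∧ F ω), ← sum_prob_fiberwise Y F, mul_sum]
  refine sum_congr rfl fun y _ => ?_
  by_cases hy : ∃ ω₀, Y ω₀ = y ∧ F ω₀
  · obtain ⟨ω₀, rfl, hω₀⟩ := hy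
    have hFib : ∀ ω, Y ω = Y ω₀ → F ω := fun ω h => (hF h).mpr hω₀
    have hEF : prob μ (fun ω => Y ω = Y ω₀ ∧ E ω ∧ F ω) = prob μ (fun ω => E ω ∧ Y ω = Y ω₀) :=
      prob_congr fun ω => ⟨fun h => ⟨h.2.1, h.1⟩, fun h => ⟨h.2, h.1, hFib ω h.2⟩⟩
    have hF' : prob μ (fun ω => Y ω = Y ω₀ ∧ F ω) = prob μ (fun ω => Y ω = Y ω₀) :=
      prob_congr fun ω => ⟨And.left, fun h => ⟨h, hFib ω h⟩⟩
    rw [hEF, hF', hind]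
  · push Not at hy
    rw [prob_eq_zero_of_forall_not (E := fun ω => Y ω = y ∧ E ω ∧ F ω) fun ω h => hy ω h.1 h.2.2,
      prob_eq_zero_of_forall_not (E := fun ω => Y ω = y ∧ F ω) fun ω h => hy ω h.1 h.2, mul_zero]

lemma prob_and_eq_mul_of_factorsThrough_pi {ι β γ : Type*} [Fintype ι] [Fintype β] [Fintype γ]
    [DecidableEq ι] [DecidableEq β] [DecidableEq γ] {E F : Ω → Prop} [DecidablePred E]
    [DecidablePred F] {X : ι → Ω → β} {Z : Ω → γ}
    -- a parameter, so that any instance for `∀ i` fits, e.g. `Nat.decidableForallFin`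
    [∀ (x : ι → β) (z : γ), DecidablePred fun ω => (∀ i, X i ω = x i) ∧ Z ω = z]
    (hind : ∀ (x : ι → β) (z : γ),
      prob μ (fun ω => E ω ∧ (∀ i, X i ω = x i) ∧ Z ω = z)
        = prob μ E * prob μ (fun ω => (∀ i, X i ω = x i) ∧ Z ω = z))
    (hF : Function.FactorsThrough F (fun ω => ((fun i => X i ω), Z ω))) :
    prob μ (fun ω => E ω ∧ F ω) = prob μ E * prob μ F := by
  refine prob_and_eq_mul_of_factorsThrough (fun y => ?_) hF
  have hy : ∀ ω, ((fun i => X i ω), Z ω) = y ↔ (∀ i, X i ω = y.1 i) ∧ Z ω = y.2 := fun ω => by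
    simp only [Prod.ext_iff, funext_iff]
  rw [prob_congr fun ω => and_congr_right' (hy ω), prob_congr hy, hind]

lemma prob_eq_le_of_indep (hμ0 : ∀ ω, 0 ≤ μ ω) (hμ1 : ∑ ω, μ ω = 1)
    {ι : Type*} [Fintype ι] [DecidableEq ι] {V W : Ω → ι} {p : ℝ}
    (hind : ∀ i, prob μ (fun ω => W ω = i ∧ V ω = i)
      = prob μ (fun ω => W ω = i) * prob μ (fun ω => V ω = i))
    (hW : ∀ i, prob μ (fun ω => W ω = i) ≤ p) :
    prob μ (fun ω => V ω = W ω) ≤ p :=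
  calc prob μ (fun ω => V ω = W ω)
      = ∑ i, prob μ (fun ω => W ω = i) * prob μ (fun ω => V ω = i) := by
        rw [← sum_prob_fiberwise W]
        refine sum_congr rfl fun i _ => (prob_congr fun ω => ?_).trans (hind i)
        constructor <;> rintro ⟨rfl, h⟩ <;> exact ⟨rfl, h⟩
    _ ≤ ∑ i, p * prob μ (fun ω => V ω = i) :=
        sum_le_sum fun i _ => mul_le_mul_of_nonneg_right (hW i) (prob_nonneg hμ0 _)
    _ = p := by rw [← mul_sum, sum_prob_eq_one hμ1, mul_one]

end Prob

section Guessing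

variable {Ω β β' γ : Type*} [Fintype Ω] [Fintype β] [Fintype β']
  [DecidableEq β] [DecidableEq β'] [DecidableEq γ] {μ : Ω → ℝ}

lemma sum_sup_prob_le_of_light [Fintype γ] [Nonempty β]
    (hμ0 : ∀ ω, 0 ≤ μ ω) (hμ1 : ∑ ω, μ ω = 1)
    (Y : Ω → β) (Z : Ω → γ) (A : Ω → Prop) [DecidablePred A] {c : ℝ} (hc : 0 ≤ c)
    (hlight : ∀ ω, A ω → prob μ (fun ω' => Y ω' = Y ω ∧ Z ω' = Z ω)
      ≤ c * prob μ (fun ω' => Z ω' = Z ω)) :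
    ∑ z, univ.sup' univ_nonempty (fun y => prob μ (fun ω => Y ω = y ∧ A ω ∧ Z ω = z)) ≤ c := by
  have hz : ∀ z, univ.sup' univ_nonempty (fun y => prob μ (fun ω => Y ω = y ∧ A ω ∧ Z ω = z))
      ≤ c * prob μ (fun ω => Z ω = z) := by
    refine fun z => sup'_le _ _ fun y _ => ?_
    by_cases h : ∃ ω₀, Y ω₀ = y ∧ A ω₀ ∧ Z ω₀ = z
    · obtain ⟨ω₀, rfl, hA, rfl⟩ := h
      exact (prob_mono hμ0 fun ω h => ⟨h.1, h.2.2⟩).trans (hlight ω₀ hA)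
    · push Not at h
      rw [prob_eq_zero_of_forall_not fun ω hω => h ω hω.1 hω.2.1 hω.2.2]
      exact mul_nonneg hc (prob_nonneg hμ0 _)
  calc _ ≤ ∑ z, c * prob μ (fun ω => Z ω = z) := sum_le_sum fun z _ => hz z
    _ = c := by rw [← mul_sum, sum_prob_eq_one hμ1, mul_one]

lemma card_heavy_mul_le (hμ0 : ∀ ω, 0 ≤ μ ω) (Y : Ω → β) (Z : Ω → γ) (c : ℝ) (z : γ) :
    (univ.filter fun y => c * prob μ (fun ω => Z ω = z)
        ≤ prob μ (fun ω => Y ω = y ∧ Z ω = z)).card * (c * prob μ (fun ω => Z ω = z))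
      ≤ prob μ (fun ω => Z ω = z) := by
  rw [← nsmul_eq_mul, ← sum_const]
  calc _ ≤ ∑ y ∈ univ.filter fun y => c * prob μ (fun ω => Z ω = z)
          ≤ prob μ (fun ω => Y ω = y ∧ Z ω = z), prob μ (fun ω => Y ω = y ∧ Z ω = z) :=
        sum_le_sum fun y hy => (mem_filter.1 hy).2
    _ ≤ ∑ y, prob μ (fun ω => Y ω = y ∧ Z ω = z) :=
        sum_le_sum_of_subset_of_nonneg (subset_univ _) fun _ _ _ => prob_nonneg hμ0 _
    _ = _ := sum_prob_fiberwise Y _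

lemma mul_sup_prob_le_of_heavy [Nonempty β] [Nonempty β'] (hμ0 : ∀ ω, 0 ≤ μ ω)
    (Y : Ω → β) (Y' : Ω → β') (Z : Ω → γ) (A : Ω → Prop) [DecidablePred A] {c : ℝ} (hc : 0 < c)
    (hheavy : ∀ ω, A ω → c * prob μ (fun ω' => Z ω' = Z ω)
      ≤ prob μ (fun ω' => Y ω' = Y ω ∧ Z ω' = Z ω)) (z : γ) :
    c * univ.sup' univ_nonempty (fun x => prob μ (fun ω => Y' ω = x ∧ A ω ∧ Z ω = z))
      ≤ univ.sup' univ_nonempty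
          (fun p : β × β' => prob μ (fun ω => Y ω = p.1 ∧ Y' ω = p.2 ∧ Z ω = z)) := by
  set L := univ.filter fun y => c * prob μ (fun ω => Z ω = z)
    ≤ prob μ (fun ω => Y ω = y ∧ Z ω = z)
  set M := univ.sup' univ_nonempty
    (fun p : β × β' => prob μ (fun ω => Y ω = p.1 ∧ Y' ω = p.2 ∧ Z ω = z))
  have hM : ∀ y x, prob μ (fun ω => Y ω = y ∧ Y' ω = x ∧ Z ω = z) ≤ M :=
    fun y x => le_sup' (fun p : β × β' => prob μ (fun ω => Y ω = p.1 ∧ Y' ω = p.2 ∧ Z ω = z))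
      (mem_univ (y, x))
  have hM0 : 0 ≤ M :=
    (prob_nonneg hμ0 _).trans (hM (Classical.arbitrary β) (Classical.arbitrary β'))
  have hx : ∀ x, prob μ (fun ω => Y' ω = x ∧ A ω ∧ Z ω = z) ≤ L.card * M := fun x =>
    calc prob μ (fun ω => Y' ω = x ∧ A ω ∧ Z ω = z)
        = ∑ y, prob μ (fun ω => Y ω = y ∧ Y' ω = x ∧ A ω ∧ Z ω = z) :=
          (sum_prob_fiberwise Y _).symm
      _ = ∑ y ∈ L, prob μ (fun ω => Y ω = y ∧ Y' ω = x ∧ A ω ∧ Z ω = z) := by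
        refine (sum_subset (subset_univ L) fun y _ hy =>
          prob_eq_zero_of_forall_not fun ω h => hy ?_).symm
        obtain ⟨rfl, -, hA, rfl⟩ := h
        exact mem_filter.2 ⟨mem_univ _, hheavy ω hA⟩
      _ ≤ ∑ _y ∈ L, M :=
        sum_le_sum fun y _ => (prob_mono hμ0 fun ω h => ⟨h.1, h.2.1, h.2.2.2⟩).trans (hM y x)
      _ = L.card * M := by rw [sum_const, nsmul_eq_mul]
  have hLM : c * (L.card * M) ≤ M := by
    rcases (prob_nonneg hμ0 fun ω => Z ω = z).eq_or_lt with hz | hz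
    · have hM_le : M ≤ 0 := hz ▸ sup'_le _ _ fun p _ => prob_mono hμ0 fun ω h => h.2.2
      rw [le_antisymm hM_le hM0, mul_zero, mul_zero]
    · have hcL : c * L.card ≤ 1 := by nlinarith [card_heavy_mul_le hμ0 Y Z c z]
      nlinarith
  exact (mul_le_mul_of_nonneg_left (sup'_le _ _ fun x _ => hx x) hc.le).trans hLM

end Guessing

section FirstHeavyIndex

variable {Ω ι 𝒳 𝒵 : Type*} [Fintype Ω] [LinearOrder ι]
  [DecidableEq 𝒳] [DecidableEq 𝒵] {μ : Ω → ℝ} {X : ι → Ω → 𝒳} {Z : Ω → 𝒵} {V : Ω → ι} {c : ℝ}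

lemma factorsThrough_of_first_heavy
    (hlight : ∀ ω j, j < V ω → prob μ (fun ω' => X j ω' = X j ω ∧ Z ω' = Z ω)
      < c * prob μ (fun ω' => Z ω' = Z ω))
    (hheavy : ∀ ω j, V ω < j → c * prob μ (fun ω' => Z ω' = Z ω)
      ≤ prob μ (fun ω' => X (V ω) ω' = X (V ω) ω ∧ Z ω' = Z ω)) :
    Function.FactorsThrough V (fun ω => ((fun i => X i ω), Z ω)) := by
  have hle : ∀ ω₁ ω₂, (∀ i, X i ω₁ = X i ω₂) → Z ω₁ = Z ω₂ → V ω₁ ≤ V ω₂ := by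
    intro ω₁ ω₂ hX hZ
    by_contra! hlt
    have h₁ := hlight ω₁ (V ω₂) hlt
    rw [hX, hZ] at h₁
    exact (hheavy ω₂ (V ω₁) hlt).not_gt h₁
  intro ω₁ ω₂ h
  simp only [Prod.mk.injEq, funext_iff] at h
  exact (hle ω₁ ω₂ h.1 h.2).antisymm (hle ω₂ ω₁ (fun i => (h.1 i).symm) h.2.symm)

lemma sum_sup_prob_le_of_ne [Fintype 𝒳] [Fintype 𝒵] [Nonempty 𝒳]
    (hμ0 : ∀ ω, 0 ≤ μ ω) (hμ1 : ∑ ω, μ ω = 1) (hc : 0 < c)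
    (hpair : ∀ i j, i ≠ j → ∑ z, univ.sup' univ_nonempty
      (fun p : 𝒳 × 𝒳 => prob μ (fun ω => X i ω = p.1 ∧ X j ω = p.2 ∧ Z ω = z)) ≤ c ^ 2)
    (hlight : ∀ ω j, j < V ω → prob μ (fun ω' => X j ω' = X j ω ∧ Z ω' = Z ω)
      < c * prob μ (fun ω' => Z ω' = Z ω))
    (hheavy : ∀ ω j, V ω < j → c * prob μ (fun ω' => Z ω' = Z ω)
      ≤ prob μ (fun ω' => X (V ω) ω' = X (V ω) ω ∧ Z ω' = Z ω))
    {v w : ι} (hvw : v ≠ w) :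
    ∑ z, univ.sup' univ_nonempty (fun x => prob μ (fun ω => X w ω = x ∧ V ω = v ∧ Z ω = z))
      ≤ c := by
  rcases hvw.lt_or_gt with hlt | hgt
  · have hsum := sum_le_sum fun z (_ : z ∈ univ) => mul_sup_prob_le_of_heavy hμ0 (X v) (X w) Z
      (fun ω => V ω = v) hc (fun ω hω => hω ▸ hheavy ω w (hω ▸ hlt)) z
    rw [← mul_sum] at hsum
    exact le_of_mul_le_mul_left (hsum.trans ((hpair v w hvw).trans_eq (sq c))) hc
  · exact sum_sup_prob_le_of_light hμ0 hμ1 (X w) Z (fun ω => V ω = v) hc.le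
      fun ω hω => (hlight ω w (hω ▸ hgt)).le

end FirstHeavyIndex

section IndexSum

variable {Ω ι 𝒳 𝒵 : Type*} [Fintype Ω] [Fintype ι] [DecidableEq ι] [Fintype 𝒳] [Nonempty 𝒳]
  [DecidableEq 𝒳] [Fintype 𝒵] [DecidableEq 𝒵] {μ : Ω → ℝ}

lemma sum_sup_prob_at_random_index_le (hμ0 : ∀ ω, 0 ≤ μ ω) (hμ1 : ∑ ω, μ ω = 1)
    {X : ι → Ω → 𝒳} {Z : Ω → 𝒵} {V W : Ω → ι} {c : ℝ} (hc : 0 ≤ c)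
    (hind : ∀ w x v z, prob μ (fun ω => W ω = w ∧ X w ω = x ∧ V ω = v ∧ Z ω = z)
      = prob μ (fun ω => W ω = w) * prob μ (fun ω => X w ω = x ∧ V ω = v ∧ Z ω = z))
    (hbound : ∀ v w, v ≠ w → ∑ z, univ.sup' univ_nonempty
      (fun x => prob μ (fun ω => X w ω = x ∧ V ω = v ∧ Z ω = z)) ≤ c) :
    ∑ v, ∑ w, ∑ z, univ.sup' univ_nonempty (fun x => prob μ
        (fun ω => X (W ω) ω = x ∧ V ω = v ∧ W ω = w ∧ Z ω = z ∧ v ≠ w))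
      ≤ Fintype.card ι * c := by
  have hterm : ∀ v w, ∑ z, univ.sup' univ_nonempty (fun x => prob μ
      (fun ω => X (W ω) ω = x ∧ V ω = v ∧ W ω = w ∧ Z ω = z ∧ v ≠ w))
        ≤ prob μ (fun ω => W ω = w) * c := by
    intro v w
    have hPW := prob_nonneg hμ0 fun ω => W ω = w
    by_cases hvw : v = w
    · refine (sum_nonpos fun z _ => sup'_le _ _ fun x _ => ?_).trans (mul_nonneg hPW hc)
      exact (prob_eq_zero_of_forall_not fun ω hω => hω.2.2.2.2 hvw).le
    have hx : ∀ z x, prob μ (fun ω => X (W ω) ω = x ∧ V ω = v ∧ W ω = w ∧ Z ω = z ∧ v ≠ w)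
        = prob μ (fun ω => W ω = w) * prob μ (fun ω => X w ω = x ∧ V ω = v ∧ Z ω = z) := by
      refine fun z x => (prob_congr fun ω => ?_).trans (hind w x v z)
      constructor
      · rintro ⟨hx, hv, rfl, hz, -⟩
        exact ⟨rfl, hx, hv, hz⟩
      · rintro ⟨rfl, hx, hv, hz⟩
        exact ⟨hx, hv, rfl, hz, hvw⟩
    calc _ ≤ ∑ z, prob μ (fun ω => W ω = w) * univ.sup' univ_nonempty
            (fun x => prob μ (fun ω => X w ω = x ∧ V ω = v ∧ Z ω = z)) :=
          sum_le_sum fun z _ => sup'_le _ _ fun x _ => (hx z x).trans_le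
            (mul_le_mul_of_nonneg_left
              (le_sup' (fun x => prob μ (fun ω => X w ω = x ∧ V ω = v ∧ Z ω = z)) (mem_univ x)) hPW)
      _ ≤ prob μ (fun ω => W ω = w) * c := by
          rw [← mul_sum]
          exact mul_le_mul_of_nonneg_left (hbound v w hvw) hPW
  calc _ ≤ ∑ _v : ι, ∑ w, prob μ (fun ω => W ω = w) * c :=
        sum_le_sum fun v _ => sum_le_sum fun w _ => hterm v w
    _ = Fintype.card ι * c := by
        simp only [← sum_mul, sum_prob_eq_one hμ1, one_mul, sum_const, card_univ, nsmul_eq_mul]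

end IndexSum

lemma mul_two_rpow_le_of_one_half_le {m : ℕ} (hm : 0 < m) (α : ℝ) {p : ℝ} (hp : 1 / 2 ≤ p) :
    m * (2 : ℝ) ^ (-α / 2) ≤ 2 ^ (-(α / 2 - logb 2 m - 1)) * p := by
  rw [show -(α / 2 - logb 2 m - 1) = 1 + logb 2 m + -α / 2 by ring,
    rpow_add two_pos, rpow_add two_pos, rpow_logb two_pos (by norm_num) (by exact_mod_cast hm),
    rpow_one]
  nlinarith [show (0 : ℝ) < m * 2 ^ (-α / 2) by positivity]

/-- Entropy-Splitting for `m` variables (non-smooth case).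
If `H_min(Xi Xj | Z) ≥ α` for all `i ≠ j`, `V` is the smallest index `j` with
`P[Xj = xj | Z = z] ≥ 2^(-α/2)` (and `V = m`, i.e. the last index, if no such
index exists), and `W` is independent of `(X, Z)` (hence of `V`, a function of
`(X, Z)`) with `H_min(W) ≥ 1`, then `H_min(X_W | V, W, Z, V ≠ W) ≥ α/2 - log2 m - 1`,
i.e. the conditional guessing probability given the event `V ≠ W` is at most
`2^(-(α/2 - log2 m - 1))`. -/
theorem entropy_splitting_m_variables
    {Ω 𝒳 𝒵 : Type} [Fintype Ω] [Fintype 𝒳] [Fintype 𝒵]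
    [DecidableEq 𝒳] [DecidableEq 𝒵] [Nonempty 𝒳]
    {m : ℕ} (hm : 1 ≤ m)
    (μ : Ω → ℝ) (hμ0 : ∀ ω, 0 ≤ μ ω) (hμ1 : ∑ ω, μ ω = 1)
    (X : Fin m → Ω → 𝒳) (Z : Ω → 𝒵) (V W : Ω → Fin m) (α : ℝ)
    -- joint min-entropy assumption: H_min(Xi Xj | Z) ≥ α for all i ≠ j
    (hα : ∀ i j : Fin m, i ≠ j →
      ∑ z, Finset.univ.sup' Finset.univ_nonempty
        (fun p : 𝒳 × 𝒳 =>
          ∑ ω, if X i ω = p.1 ∧ X j ω = p.2 ∧ Z ω = z then μ ω else 0)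
      ≤ (2:ℝ) ^ (-α))
    -- defining property of V: all indices before V ω have small conditional
    -- probability, and either V ω itself has large conditional probability or
    -- V ω is the last index
    (hV : ∀ ω,
      (∀ j : Fin m, j < V ω →
        (∑ ω', if X j ω' = X j ω ∧ Z ω' = Z ω then μ ω' else 0)
          < (2:ℝ) ^ (-α/2) * (∑ ω', if Z ω' = Z ω then μ ω' else 0)) ∧
      ((2:ℝ) ^ (-α/2) * (∑ ω', if Z ω' = Z ω then μ ω' else 0)
          ≤ (∑ ω', if X (V ω) ω' = X (V ω) ω ∧ Z ω' = Z ω then μ ω' else 0)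
        ∨ V ω = ⟨m - 1, by omega⟩))
    -- W is independent of (X1, ..., Xm, Z) (and hence of V)
    (hWindep : ∀ (w : Fin m) (x : Fin m → 𝒳) (z : 𝒵),
      (∑ ω, if W ω = w ∧ (∀ i, X i ω = x i) ∧ Z ω = z then μ ω else 0)
        = (∑ ω, if W ω = w then μ ω else 0)
          * (∑ ω, if (∀ i, X i ω = x i) ∧ Z ω = z then μ ω else 0))
    -- H_min(W) ≥ 1
    (hWmin : ∀ w : Fin m, (∑ ω, if W ω = w then μ ω else 0) ≤ 1/2) :
    ∑ v : Fin m, ∑ w : Fin m, ∑ z,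
      Finset.univ.sup' Finset.univ_nonempty
        (fun x => ∑ ω,
          if X (W ω) ω = x ∧ V ω = v ∧ W ω = w ∧ Z ω = z ∧ v ≠ w
          then μ ω else 0)
    ≤ (2:ℝ) ^ (-(α/2 - Real.logb 2 m - 1))
        * (∑ ω, if V ω ≠ W ω then μ ω else 0) := by
  have hc : (0 : ℝ) < 2 ^ (-α / 2) := by positivity
  have hpair : ∀ i j : Fin m, i ≠ j → ∑ z, univ.sup' univ_nonempty (fun p : 𝒳 × 𝒳 =>
      prob μ (fun ω => X i ω = p.1 ∧ X j ω = p.2 ∧ Z ω = z)) ≤ ((2 : ℝ) ^ (-α / 2)) ^ 2 := by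
    rw [← rpow_natCast, ← rpow_mul zero_le_two]
    convert hα using 5
    push_cast
    ring
  have hheavy : ∀ ω j, V ω < j → _ := fun ω j hj => (hV ω).2.resolve_right fun hlast => by
    have := j.isLt
    rw [hlast, Fin.lt_def, Fin.val_mk] at hj
    omega
  have hVY := factorsThrough_of_first_heavy (fun ω => (hV ω).1) hheavy
  have hWY : ∀ w (F : Ω → Prop) [DecidablePred F],
      Function.FactorsThrough F (fun ω => ((fun i => X i ω), Z ω)) →
        prob μ (fun ω => W ω = w ∧ F ω) = prob μ (fun ω => W ω = w) * prob μ F :=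
    fun w F _ hF => prob_and_eq_mul_of_factorsThrough_pi (hWindep w) hF
  have hsum := sum_sup_prob_at_random_index_le hμ0 hμ1 hc.le
    (fun w x v z => hWY w _ fun ω₁ ω₂ h => by
      rw [hVY h]
      simp only [Prod.mk.injEq, funext_iff] at h
      rw [h.1 w, h.2])
    fun v w => sum_sup_prob_le_of_ne hμ0 hμ1 hc hpair (fun ω => (hV ω).1) hheavy
  have hne : 1 / 2 ≤ prob μ (fun ω => V ω ≠ W ω) := by
    rw [prob_not hμ1]
    linarith [prob_eq_le_of_indep hμ0 hμ1 (V := V)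
      (fun i => hWY i _ fun ω₁ ω₂ h => by rw [hVY h]) hWmin]
  rw [Fintype.card_fin] at hsum
  exact hsum.trans (mul_two_rpow_le_of_one_half_le hm α hne)
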